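/- For |x| < 1 and parameters a, b with 2b−1 not zero or a negative integer, the function y₁(x) = ₂F₁(a, a−b+3/2; b−1/2; x²) + (2ax/(2b−1)) ₂F₁(a+1, a−b+3/2; b+1/2; x²) satisfies x(1−x²)y'' + (2b−1 − 2x − (4a−2b+3)x²)y' − 2a(1 + 2(a−b+1)x)y = 0. -/

import Mathlib

/-!
Write `y₁(x) = ∑ cₙ xⁿ`: the even coefficients come from the first ₂F₁ in `x²`, the odd ones from
the second. Consecutive coefficients are linked by first-order recurrences whose shape alternates
with the parity of `n`, namely `(n + 2b - 1) cₙ₊₁ = (n + 2a) cₙ` for even `n` and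
`(n + 1) cₙ₊₁ = (n + 2a - 2b + 2) cₙ` for odd `n`. Two consecutive ones combine into the
parity-free three-term recurrence `(n+2)(n+2b) cₙ₊₂ = 2(n+1+a) cₙ₊₁ + (n+2a)(n+2+2a-2b) cₙ`,
which says exactly that the formal series `∑ cₙ Xⁿ` satisfies the differential equation. The
factors in the first-order recurrences tend to `1`, so the series and its termwise derivatives
converge on `|x| < 1`, and evaluating the formal identity at `x` gives the claim.
-/

open scoped Nat

/-- Pochhammer symbol (rising factorial). -/
noncomputable def poch (a : ℝ) (n : ℕ) : ℝ := (ascPochhammer ℝ n).eval a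

/-- Gauss hypergeometric series ₂F₁(a,b;c;z). -/
noncomputable def F (a b c z : ℝ) : ℝ :=
  ∑' n : ℕ, poch a n * poch b n / (poch c n * (n ! : ℝ)) * z ^ n

/-- The first Frobenius solution in the second contiguous case. -/
noncomputable def y₁ (a b : ℝ) (t : ℝ) : ℝ :=
  F a (a - b + 3/2) (b - 1/2) (t ^ 2)
    + (2 * a * t / (2 * b - 1)) * F (a + 1) (a - b + 3/2) (b + 1/2) (t ^ 2)

open Filter
open Polynomial (X C)
open PowerSeries (coeff)
open scoped Polynomial PowerSeries

section PowerSeriesSum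

noncomputable def powerSeriesSum (f : ℝ⟦X⟧) (x : ℝ) : ℝ :=
  ∑' n, coeff n f * x ^ n

/-- A ratio-test form of `limsup |cₙ₊₁ / cₙ| ≤ 1` that tolerates zero coefficients; unlike a bound
on the radius of convergence, it passes directly to the derivative. -/
def CoeffRatioLimsupLeOne (f : ℝ⟦X⟧) : Prop :=
  ∀ q > 1, ∀ᶠ n in atTop, |coeff (n + 1) f| ≤ q * |coeff n f|

lemma eventually_natCast_add_le_mul_sub (M : ℝ) {q : ℝ} (hq : 1 < q) :
    ∀ᶠ n : ℕ in atTop, (n : ℝ) + M ≤ q * (n - M) := by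
  filter_upwards [(tendsto_natCast_atTop_atTop.const_mul_atTop (sub_pos.2 hq)).eventually_ge_atTop
    ((q + 1) * M)] with n hn
  linarith

lemma coeffRatioLimsupLeOne_of_recurrence {f : ℝ⟦X⟧} {α β : ℕ → ℝ} {M : ℝ}
    (hα : ∀ n, |α n| ≤ M) (hβ : ∀ n, |β n| ≤ M)
    (hrec : ∀ n, (n + β n) * coeff (n + 1) f = (n + α n) * coeff n f) :
    CoeffRatioLimsupLeOne f := by
  intro q hq
  filter_upwards [eventually_natCast_add_le_mul_sub M hq,
    (tendsto_natCast_atTop_atTop (R := ℝ)).eventually_gt_atTop M] with n hn hnM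
  have hαn := abs_le.mp (hα n)
  have hβn := abs_le.mp (hβ n)
  have hpos : 0 < (n : ℝ) + β n := by linarith
  refine le_of_mul_le_mul_left ?_ hpos
  calc ((n : ℝ) + β n) * |coeff (n + 1) f|
      = |(n : ℝ) + α n| * |coeff n f| := by rw [← abs_of_pos hpos, ← abs_mul, hrec, abs_mul]
    _ ≤ ((n : ℝ) + β n) * (q * |coeff n f|) := by
        rw [← mul_assoc, mul_comm _ q]
        gcongr
        rw [abs_le]
        constructor <;> nlinarith

variable {f : ℝ⟦X⟧}

lemma CoeffRatioLimsupLeOne.derivative (hf : CoeffRatioLimsupLeOne f) :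
    CoeffRatioLimsupLeOne (d⁄dX ℝ f) := by
  intro q hq
  have hs : 1 < √q := Real.lt_sqrt_of_sq_lt (by linarith)
  filter_upwards [(tendsto_add_atTop_nat 1).eventually (hf √q hs),
    eventually_natCast_add_le_mul_sub 2 hs] with n hc hn
  simp only [PowerSeries.coeff_derivative, abs_mul, Nat.cast_add, Nat.cast_one]
  rw [abs_of_pos (by positivity : (0 : ℝ) < n + 1 + 1), abs_of_pos (by positivity : (0 : ℝ) < n + 1)]
  calc |coeff (n + 1 + 1) f| * (n + 1 + 1)
      ≤ √q * |coeff (n + 1) f| * (√q * (n + 1)) := by gcongr; linarith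
    _ = √q * √q * (|coeff (n + 1) f| * (n + 1)) := by ring
    _ = q * (|coeff (n + 1) f| * (n + 1)) := by rw [Real.mul_self_sqrt (by linarith)]

lemma CoeffRatioLimsupLeOne.summable (hf : CoeffRatioLimsupLeOne f) {x : ℝ} (hx : |x| < 1) :
    Summable fun n => coeff n f * x ^ n := by
  have hq : 1 < 2 / (1 + |x|) := by rw [one_lt_div (by positivity)]; linarith
  refine summable_of_ratio_norm_eventually_le (r := 2 / (1 + |x|) * |x|) ?_ ?_
  · rw [div_mul_eq_mul_div, div_lt_one (by positivity)]; linarith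
  filter_upwards [hf _ hq] with n hn
  simp only [Real.norm_eq_abs, abs_mul, abs_pow, pow_succ]
  calc |coeff (n + 1) f| * (|x| ^ n * |x|)
      ≤ 2 / (1 + |x|) * |coeff n f| * (|x| ^ n * |x|) := by gcongr
    _ = 2 / (1 + |x|) * |x| * (|coeff n f| * |x| ^ n) := by ring

lemma CoeffRatioLimsupLeOne.hasSum (hf : CoeffRatioLimsupLeOne f) {x : ℝ} (hx : |x| < 1) :
    HasSum (fun n => coeff n f * x ^ n) (powerSeriesSum f x) :=
  (hf.summable hx).hasSum

lemma CoeffRatioLimsupLeOne.tsum_termwise_deriv (hf : CoeffRatioLimsupLeOne f) {x : ℝ}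
    (hx : |x| < 1) :
    ∑' n, coeff n f * (n * x ^ (n - 1)) = powerSeriesSum (d⁄dX ℝ f) x := by
  rw [tsum_eq_zero_add' ((hf.derivative.summable hx).congr fun n => ?_)]
  · simp only [powerSeriesSum, PowerSeries.coeff_derivative, CharP.cast_eq_zero, zero_mul,
      mul_zero, zero_add, Nat.cast_add, Nat.cast_one, Nat.add_sub_cancel]
    exact tsum_congr fun n => by ring
  · simp only [PowerSeries.coeff_derivative, Nat.cast_add, Nat.cast_one, Nat.add_sub_cancel]
    ring

lemma CoeffRatioLimsupLeOne.hasDerivAt (hf : CoeffRatioLimsupLeOne f) {x : ℝ} (hx : |x| < 1) :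
    HasDerivAt (powerSeriesSum f) (powerSeriesSum (d⁄dX ℝ f) x) x := by
  obtain ⟨r, hxr, hr1⟩ := exists_between hx
  have hr0 : 0 < r := (abs_nonneg x).trans_lt hxr
  have hu : Summable fun n => |coeff (n - 1) (d⁄dX ℝ f) * r ^ (n - 1)| :=
    (summable_nat_add_iff 1).mp (hf.derivative.summable (by rwa [abs_of_pos hr0])).abs
  have h0 : Summable fun n => coeff n f * (0 : ℝ) ^ n := hf.summable (by simp)
  rw [← hf.tsum_termwise_deriv hx]
  change HasDerivAt (fun z => ∑' n, coeff n f * z ^ n) _ x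
  refine hasDerivAt_tsum_of_isPreconnected (g := fun n z => coeff n f * z ^ n) hu
    Metric.isOpen_ball (convex_ball 0 r).isPreconnected
    (fun n y _ => (hasDerivAt_pow n y).const_mul _) (fun n y hy => ?_)
    (Metric.mem_ball_self hr0) h0 (by rwa [mem_ball_zero_iff, Real.norm_eq_abs])
  rw [mem_ball_zero_iff, Real.norm_eq_abs] at hy
  cases n with
  | zero => simp
  | succ n =>
    simp only [PowerSeries.coeff_derivative, Nat.add_sub_cancel, Real.norm_eq_abs, abs_mul,
      abs_pow, Nat.cast_add, Nat.cast_one]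
    rw [abs_of_pos (by positivity : (0 : ℝ) < n + 1), abs_of_pos hr0, ← mul_assoc]
    gcongr

lemma CoeffRatioLimsupLeOne.eqOn_deriv (hf : CoeffRatioLimsupLeOne f) {g : ℝ → ℝ}
    (hg : Set.EqOn g (powerSeriesSum f) (Metric.ball 0 1)) :
    Set.EqOn (deriv g) (powerSeriesSum (d⁄dX ℝ f)) (Metric.ball 0 1) := fun x hx => by
  rw [hg.deriv Metric.isOpen_ball hx]
  exact (hf.hasDerivAt (by simpa using hx)).deriv

lemma hasSum_coeff_X_mul {x s : ℝ} (hf : HasSum (fun n => coeff n f * x ^ n) s) :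
    HasSum (fun n => coeff n (PowerSeries.X * f) * x ^ n) (x * s) := by
  refine (hasSum_nat_add_iff' 1).mp ?_
  simpa [PowerSeries.coeff_succ_X_mul, pow_succ, mul_left_comm, mul_comm, mul_assoc]
    using hf.mul_left x

lemma hasSum_coeff_polynomial_mul {x s : ℝ} (hf : HasSum (fun n => coeff n f * x ^ n) s)
    (p : ℝ[X]) : HasSum (fun n => coeff n ((p : ℝ⟦X⟧) * f) * x ^ n) (p.eval x * s) := by
  induction p using Polynomial.induction_on with
  | C a => simpa [PowerSeries.coeff_C_mul, mul_assoc] using hf.mul_left a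
  | add p q hp hq => simpa [add_mul] using hp.add hq
  | monomial n a ih =>
    convert hasSum_coeff_X_mul ih using 1
    · ext k; congr 2; push_cast; ring
    · simp; ring

end PowerSeriesSum

lemma poch_succ (x : ℝ) (n : ℕ) : poch x (n + 1) = poch x n * (x + n) :=
  ascPochhammer_succ_eval n x

lemma poch_succ_left (x : ℝ) (n : ℕ) : poch x (n + 1) = x * poch (x + 1) n := by
  simp [poch, ascPochhammer_succ_left, Polynomial.eval_comp]

lemma poch_ne_zero {x : ℝ} (hx : ∀ k : ℕ, x + k ≠ 0) (n : ℕ) : poch x n ≠ 0 := by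
  induction n with
  | zero => simp [poch]
  | succ n ih => rw [poch_succ]; exact mul_ne_zero ih (hx n)

section Y1

variable {a b : ℝ}

/-- The Taylor coefficients of `y₁ a b` (with floor divisions): the even ones are those of the first
₂F₁ in `x²`, and `2a/(2b-1) · (a+1)ₘ/(b+1/2)ₘ = (a)ₘ₊₁/(b-1/2)ₘ₊₁` puts the odd ones in the same
shape. -/
noncomputable def y1Coeff (a b : ℝ) (n : ℕ) : ℝ :=
  poch a ((n + 1) / 2) * poch (a - b + 3/2) (n / 2) / (poch (b - 1/2) ((n + 1) / 2) * (n / 2)!)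

lemma y1Coeff_two_mul (m : ℕ) :
    y1Coeff a b (2 * m) = poch a m * poch (a - b + 3/2) m / (poch (b - 1/2) m * m !) := by
  rw [y1Coeff, show (2 * m + 1) / 2 = m by omega, show 2 * m / 2 = m by omega]

lemma y1Coeff_two_mul_add_one (m : ℕ) :
    y1Coeff a b (2 * m + 1) = 2 * a / (2 * b - 1) *
      (poch (a + 1) m * poch (a - b + 3/2) m / (poch (b + 1/2) m * m !)) := by
  rw [y1Coeff, show (2 * m + 1 + 1) / 2 = m + 1 by omega, show (2 * m + 1) / 2 = m by omega,
    poch_succ_left, poch_succ_left, show b - 1/2 + 1 = b + 1/2 by ring,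
    show 2 * b - 1 = 2 * (b - 1/2) by ring]
  simp only [div_eq_mul_inv, mul_inv]
  ring

noncomputable def y1RatioNum (a b : ℝ) (n : ℕ) : ℝ := if Even n then 2 * a else 2 * a - 2 * b + 2

noncomputable def y1RatioDen (b : ℝ) (n : ℕ) : ℝ := if Even n then 2 * b - 1 else 1

lemma y1Coeff_recurrence (hb : ∀ k : ℕ, 2 * b - 1 + (k : ℝ) ≠ 0) (n : ℕ) :
    (n + y1RatioDen b n) * y1Coeff a b (n + 1) = (n + y1RatioNum a b n) * y1Coeff a b n := by
  obtain ⟨m, rfl | rfl⟩ := Nat.even_or_odd' n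
  · have hb' : ∀ k : ℕ, b - 1/2 + k ≠ 0 := fun k => by
      have := hb (2 * k); push_cast at this; contrapose! this; linarith
    have hm := hb (2 * m)
    push_cast at hm
    have hP := poch_ne_zero hb' m
    simp only [y1RatioNum, y1RatioDen, even_two_mul, if_true, y1Coeff,
      show (2 * m + 1 + 1) / 2 = m + 1 by omega, show (2 * m + 1) / 2 = m by omega,
      show 2 * m / 2 = m by omega, poch_succ]
    generalize poch (b - 1/2) m = P at *
    push_cast
    field_simp
    ring
  · simp only [y1RatioNum, y1RatioDen, Nat.even_add_one, even_two_mul, not_true, if_false, y1Coeff,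
      show (2 * m + 1 + 1 + 1) / 2 = m + 1 by omega, show (2 * m + 1 + 1) / 2 = m + 1 by omega,
      show (2 * m + 1) / 2 = m by omega, poch_succ, Nat.factorial_succ]
    push_cast
    field_simp
    ring

lemma y1Coeff_three_term (hb : ∀ k : ℕ, 2 * b - 1 + (k : ℝ) ≠ 0) (n : ℕ) :
    (n + 2) * (n + 2 * b) * y1Coeff a b (n + 2)
      = 2 * (n + 1 + a) * y1Coeff a b (n + 1)
        + (n + 2 * a) * (n + 2 + 2 * a - 2 * b) * y1Coeff a b n := by
  have h0 := y1Coeff_recurrence (a := a) hb n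
  have h1 := y1Coeff_recurrence (a := a) hb (n + 1)
  push_cast at h1
  rcases Nat.even_or_odd n with hn | hn
  · simp only [y1RatioNum, y1RatioDen, hn, Nat.even_add_one, not_true, if_true, if_false] at h0 h1
    linear_combination (n + 2 * b) * h1 + (n + 2 * a - 2 * b + 2) * h0
  · simp only [y1RatioNum, y1RatioDen, Nat.not_even_iff_odd.mpr hn, Nat.even_add_one,
      not_false_eq_true, if_true, if_false] at h0 h1
    linear_combination (n + 2) * h1 + (n + 2 * a) * h0

noncomputable def y1Series (a b : ℝ) : ℝ⟦X⟧ := PowerSeries.mk (y1Coeff a b)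

lemma coeffRatioLimsupLeOne_y1Series (hb : ∀ k : ℕ, 2 * b - 1 + (k : ℝ) ≠ 0) :
    CoeffRatioLimsupLeOne (y1Series a b) := by
  have := abs_nonneg (2 * a)
  have := abs_nonneg (2 * a - 2 * b + 2)
  have := abs_nonneg (2 * b - 1)
  refine coeffRatioLimsupLeOne_of_recurrence (M := |2 * a| + |2 * a - 2 * b + 2| + |2 * b - 1| + 1)
    (fun n => ?_) (fun n => ?_) (by simpa [y1Series] using y1Coeff_recurrence hb)
  · unfold y1RatioNum; split_ifs <;> linarith
  · unfold y1RatioDen; split_ifs <;> linarith [abs_one (α := ℝ)]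

lemma y1_eqOn_powerSeriesSum (hb : ∀ k : ℕ, 2 * b - 1 + (k : ℝ) ≠ 0) :
    Set.EqOn (y₁ a b) (powerSeriesSum (y1Series a b)) (Metric.ball 0 1) := by
  intro x hx
  have hs := (coeffRatioLimsupLeOne_y1Series (a := a) hb).summable (x := x) (by simpa using hx)
  simp only [powerSeriesSum, y1Series, PowerSeries.coeff_mk] at hs ⊢
  have h2 : Function.Injective fun m : ℕ => 2 * m := mul_right_injective₀ two_ne_zero
  have he : Summable fun m => y1Coeff a b (2 * m) * x ^ (2 * m) := hs.comp_injective h2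
  have ho : Summable fun m => y1Coeff a b (2 * m + 1) * x ^ (2 * m + 1) :=
    hs.comp_injective ((add_left_injective 1).comp h2)
  rw [← tsum_even_add_odd (f := fun n => y1Coeff a b n * x ^ n) he ho, y₁, F, F, ← tsum_mul_left]
  congr 1 <;> refine tsum_congr fun m => ?_
  · rw [y1Coeff_two_mul, pow_mul]
  · rw [y1Coeff_two_mul_add_one]; ring

lemma y1Series_ode (hb : ∀ k : ℕ, 2 * b - 1 + (k : ℝ) ≠ 0) :
    ((X * (1 - X ^ 2) : ℝ[X]) : ℝ⟦X⟧) * d⁄dX ℝ (d⁄dX ℝ (y1Series a b))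
      + ((C (2 * b - 1) - 2 * X - C (4 * a - 2 * b + 3) * X ^ 2 : ℝ[X]) : ℝ⟦X⟧)
        * d⁄dX ℝ (y1Series a b)
      - ((C (2 * a) * (1 + C (2 * (a - b + 1)) * X) : ℝ[X]) : ℝ⟦X⟧) * y1Series a b = 0 := by
  set Y := y1Series a b
  -- Horner form in `X`, so that each coefficient is read off by `coeff_succ_X_mul`.
  have horner : ((X * (1 - X ^ 2) : ℝ[X]) : ℝ⟦X⟧) * d⁄dX ℝ (d⁄dX ℝ Y)
      + ((C (2 * b - 1) - 2 * X - C (4 * a - 2 * b + 3) * X ^ 2 : ℝ[X]) : ℝ⟦X⟧) * d⁄dX ℝ Y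
      - ((C (2 * a) * (1 + C (2 * (a - b + 1)) * X) : ℝ[X]) : ℝ⟦X⟧) * Y
      = PowerSeries.C (2 * b - 1) * d⁄dX ℝ Y - PowerSeries.C (2 * a) * Y
        + PowerSeries.X * (d⁄dX ℝ (d⁄dX ℝ Y) - PowerSeries.C 2 * d⁄dX ℝ Y
          - PowerSeries.C (2 * a) * (PowerSeries.C (2 * (a - b + 1)) * Y)
          - PowerSeries.X * (PowerSeries.C (4 * a - 2 * b + 3) * d⁄dX ℝ Y
            + PowerSeries.X * d⁄dX ℝ (d⁄dX ℝ Y))) := by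
    have h2 : ((2 : ℝ[X]) : ℝ⟦X⟧) = PowerSeries.C 2 :=
      (map_ofNat Polynomial.coeToPowerSeries.ringHom 2).trans (map_ofNat PowerSeries.C 2).symm
    push_cast [h2]
    ring
  have h0 := y1Coeff_recurrence (a := a) hb 0
  simp only [y1RatioNum, y1RatioDen, Even.zero, if_true] at h0
  rw [horner]
  ext n
  rcases n with _ | _ | _ | n
  all_goals simp only [Y, y1Series, map_add, map_sub, map_zero, PowerSeries.coeff_succ_X_mul,
    PowerSeries.coeff_zero_X_mul, PowerSeries.coeff_C_mul, PowerSeries.coeff_derivative,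
    PowerSeries.coeff_mk, sub_mul, add_mul, map_one, one_mul]
  all_goals push_cast
  · linear_combination h0
  · linear_combination y1Coeff_three_term (a := a) hb 0
  · linear_combination y1Coeff_three_term (a := a) hb 1
  · have h := y1Coeff_three_term (a := a) hb (n + 2)
    push_cast at h
    linear_combination h

end Y1

theorem y1_solves_second_ode (a b : ℝ) (hb : ∀ k : ℕ, 2 * b - 1 + (k : ℝ) ≠ 0) :
    ∀ x : ℝ, |x| < 1 →
      x * (1 - x ^ 2) * deriv (deriv (y₁ a b)) x
        + (2 * b - 1 - 2 * x - (4 * a - 2 * b + 3) * x ^ 2) * deriv (y₁ a b) x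
        - 2 * a * (1 + 2 * (a - b + 1) * x) * y₁ a b x = 0 := by
  intro x hx
  have hY := coeffRatioLimsupLeOne_y1Series (a := a) hb
  have hx' : x ∈ Metric.ball (0 : ℝ) 1 := by simpa using hx
  have h0 := y1_eqOn_powerSeriesSum (a := a) hb
  have h1 := hY.eqOn_deriv h0
  have h2 := hY.derivative.eqOn_deriv h1
  have hsum := ((hasSum_coeff_polynomial_mul (hY.derivative.derivative.hasSum hx)
      (X * (1 - X ^ 2))).add (hasSum_coeff_polynomial_mul (hY.derivative.hasSum hx)
      (C (2 * b - 1) - 2 * X - C (4 * a - 2 * b + 3) * X ^ 2))).sub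
    (hasSum_coeff_polynomial_mul (hY.hasSum hx) (C (2 * a) * (1 + C (2 * (a - b + 1)) * X)))
  simp_rw [← add_mul, ← sub_mul, ← map_add, ← map_sub, y1Series_ode hb, map_zero, zero_mul] at hsum
  have hval := hsum.unique hasSum_zero
  simp only [Polynomial.eval_mul, Polynomial.eval_sub, Polynomial.eval_add, Polynomial.eval_pow,
    Polynomial.eval_X, Polynomial.eval_C, Polynomial.eval_one, Polynomial.eval_ofNat] at hval
  rw [h0 hx', h1 hx', h2 hx']
  linear_combination hval
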